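/- arXiv:1506.04782 — 6 statements merged into one kernel-verified Lean document; each statement's English description precedes it below -/
import Mathlib

section
/- Let λ > 0, let x₁, x₂, …, x_t ∈ ℝ^N, and define V₀ = λI and Vᵢ = V_{i−1} + xᵢxᵢᵀ for i = 1,…,t. Then log(det(V_t)/det(λI)) ≤ Σ_{i=1}^{t} xᵢᵀ V_{i−1}^{−1} xᵢ. -/
/-! By the matrix determinant lemma, `det V_{i+1} = det V_i · (1 + xᵢᵀ V_i⁻¹ xᵢ)`, so the log-determinant
ratio telescopes into `∑ log (1 + xᵢᵀ V_i⁻¹ xᵢ)`, and each term is bounded by `log (1 + q) ≤ q`. -/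

open Matrix

namespace Matrix

theorem det_add_vecMulVec {n R : Type*} [Fintype n] [DecidableEq n] [CommRing R]
    {A : Matrix n n R} (hA : IsUnit A.det) (u v : n → R) :
    (A + vecMulVec u v).det = A.det * (1 + v ⬝ᵥ (A⁻¹ *ᵥ u)) := by
  have hfactor : A + vecMulVec u v = A * (1 + vecMulVec (A⁻¹ *ᵥ u) v) := by
    rw [Matrix.mul_add, Matrix.mul_one, mul_vecMulVec, mulVec_mulVec, mul_nonsing_inv _ hA,
      one_mulVec]
  rw [hfactor, det_mul, vecMulVec_eq Unit, det_one_add_replicateCol_mul_replicateRow]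

theorem PosDef.add_vecMulVec_self {n : Type*} [Fintype n] {A : Matrix n n ℝ} (hA : A.PosDef)
    (v : n → ℝ) : (A + vecMulVec v v).PosDef := by
  simpa using hA.add_posSemidef (posSemidef_vecMulVec_self_star v)

end Matrix

theorem Real.log_div_le_sum_of_eq_mul_one_add {d q : ℕ → ℝ} (hd : ∀ i, 0 < d i)
    (hrec : ∀ i, d (i + 1) = d i * (1 + q i)) (t : ℕ) :
    Real.log (d t / d 0) ≤ ∑ i ∈ Finset.range t, q i := by
  rw [Real.log_div (hd t).ne' (hd 0).ne', ← Finset.sum_range_sub (fun i => Real.log (d i))]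
  refine Finset.sum_le_sum fun i _ => ?_
  have hq : 0 < 1 + q i := pos_of_mul_pos_right (hrec i ▸ hd (i + 1)) (hd i).le
  rw [hrec i, Real.log_mul (hd i).ne' hq.ne', add_sub_cancel_left]
  linarith [Real.log_le_sub_one_of_pos hq]

/-- Let `λ > 0`, let `x₁, …, x_t ∈ ℝ^N`, and define `V₀ = λI` and
`Vᵢ = V_{i−1} + xᵢxᵢᵀ`. Then `log(det(V_t)/det(λI)) ≤ ∑_{i=1}^t xᵢᵀ V_{i−1}⁻¹ xᵢ`.
(Here `x 0, …, x (t-1)` play the roles of `x₁, …, x_t`.) -/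
theorem statement2 {N : ℕ} (lam : ℝ) (hlam : 0 < lam) (t : ℕ) (x : ℕ → Fin N → ℝ)
    (V : ℕ → Matrix (Fin N) (Fin N) ℝ)
    (hV0 : V 0 = lam • (1 : Matrix (Fin N) (Fin N) ℝ))
    (hV : ∀ i, V (i + 1) = V i + Matrix.vecMulVec (x i) (x i)) :
    Real.log ((V t).det / (lam • (1 : Matrix (Fin N) (Fin N) ℝ)).det) ≤
      ∑ i ∈ Finset.range t, x i ⬝ᵥ ((V i)⁻¹ *ᵥ x i) := by
  have hPD : ∀ i, (V i).PosDef := by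
    intro i
    induction i with
    | zero => rw [hV0, smul_one_eq_diagonal]; exact posDef_diagonal_iff.mpr fun _ => hlam
    | succ i ih => rw [hV i]; exact ih.add_vecMulVec_self (x i)
  rw [← hV0]
  refine Real.log_div_le_sum_of_eq_mul_one_add (fun i => (hPD i).det_pos) (fun i => ?_) t
  rw [hV i, det_add_vecMulVec (hPD i).det_pos.ne'.isUnit]
end

section
/- Let λ > 0 and let Λ = diag(λ₁,…,λ_N) be a diagonal matrix with λ = λ₁ ≤ λ₂ ≤ ⋯ ≤ λ_N. Let T ∈ ℕ, let x₁,…,x_T ∈ ℝ^N with ‖x_t‖₂ ≤ 1 for all t, and set V_{T+1} = Λ + Σ_{t=1}^{T} x_t x_tᵀ. If d is the effective dimension, then log(det(V_{T+1})/det(Λ)) ≤ 2·d·log(1 + T/λ). -/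
open Matrix Finset
open scoped MatrixOrder EuclideanSpace

/-! Hadamard's inequality bounds `det V` by the product of its diagonal entries `λᵢ + sᵢ`,
where `sᵢ = ∑ₜ xₜᵢ²` and `∑ᵢ sᵢ ≤ T`. The first `d` factors `1 + sᵢ/λᵢ` of the resulting bound on
`det V / det Λ` are each at most `1 + T/λ`; for the others `log (1 + sᵢ/λᵢ) ≤ sᵢ/λ_{d+1}`, and these
sum to at most `T/λ_{d+1}`, which is below `d · log (1 + T/λ)` precisely because `d + 1` fails the
defining inequality of the effective dimension. -/

theorem Matrix.abs_det_le_prod_norm_col {n : ℕ} (B : Matrix (Fin n) (Fin n) ℝ) :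
    |B.det| ≤ ∏ j, ‖WithLp.toLp 2 (Bᵀ j)‖ := by
  let b := EuclideanSpace.basisFun (Fin n) ℝ
  have h := (b.toBasis.orientation).abs_volumeForm_apply_le fun j => WithLp.toLp 2 (Bᵀ j)
  rwa [(b.toBasis.orientation).volumeForm_robust b rfl, Module.Basis.det_apply] at h

theorem Matrix.PosSemidef.det_le_prod_diag {n : ℕ} {M : Matrix (Fin n) (Fin n) ℝ}
    (hM : M.PosSemidef) : M.det ≤ ∏ i, M i i := by
  obtain ⟨B, rfl⟩ := CStarAlgebra.nonneg_iff_eq_star_mul_self.mp hM.nonneg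
  have hcol : ∀ j, ‖WithLp.toLp 2 (Bᵀ j)‖ ^ 2 = (star B * B) j j := by
    intro j
    rw [EuclideanSpace.norm_sq_eq]
    simp [Matrix.mul_apply, sq]
  calc (star B * B).det = |B.det| ^ 2 := by
        rw [det_mul, star_eq_conjTranspose, det_conjTranspose, star_trivial, sq_abs, sq]
    _ ≤ (∏ j, ‖WithLp.toLp 2 (Bᵀ j)‖) ^ 2 := by gcongr; exact B.abs_det_le_prod_norm_col
    _ = ∏ j, (star B * B) j j := by rw [← prod_pow]; exact prod_congr rfl fun j _ => hcol j

theorem Matrix.log_det_diagonal_add_div_le_sum {n : ℕ} {μ : Fin n → ℝ} (hμ : ∀ i, 0 < μ i)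
    {S : Matrix (Fin n) (Fin n) ℝ} (hS : S.PosSemidef) :
    Real.log ((diagonal μ + S).det / (diagonal μ).det) ≤ ∑ i, Real.log (1 + S i i / μ i) := by
  have hΛ : (diagonal μ).PosDef := posDef_diagonal_iff.mpr hμ
  have hterm : ∀ i, 0 < 1 + S i i / μ i := fun i =>
    add_pos_of_pos_of_nonneg one_pos (div_nonneg hS.diag_nonneg (hμ i).le)
  have hratio : (diagonal μ + S).det / (diagonal μ).det ≤ ∏ i, (1 + S i i / μ i) := calc
    (diagonal μ + S).det / (diagonal μ).det ≤ (∏ i, (μ i + S i i)) / ∏ i, μ i := by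
      rw [det_diagonal]
      gcongr
      · exact (prod_pos fun i _ => hμ i).le
      · simpa using (hΛ.add_posSemidef hS).posSemidef.det_le_prod_diag
    _ = ∏ i, (1 + S i i / μ i) := by
      rw [← prod_div_distrib]
      exact prod_congr rfl fun i _ => by field_simp [(hμ i).ne']
  calc Real.log ((diagonal μ + S).det / (diagonal μ).det)
      ≤ Real.log (∏ i, (1 + S i i / μ i)) :=
        Real.log_le_log (div_pos (hΛ.add_posSemidef hS).det_pos hΛ.det_pos) hratio
    _ = ∑ i, Real.log (1 + S i i / μ i) := Real.log_prod fun i _ => (hterm i).ne'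

theorem Matrix.trace_sum_vecMulVec_self_le_card {ι n : Type*} [Fintype n] (s : Finset ι)
    (x : ι → n → ℝ) (hx : ∀ t ∈ s, √(∑ i, x t i ^ 2) ≤ 1) :
    (∑ t ∈ s, vecMulVec (x t) (x t)).trace ≤ #s := by
  rw [trace_sum, ← nsmul_one, ← sum_const]
  refine sum_le_sum fun t ht => ?_
  simpa [trace_vecMulVec, dotProduct, sq] using Real.sqrt_le_one.mp (hx t ht)

theorem sum_log_one_add_div_le_card_mul {ι : Type*} (s : Finset ι) {a μ : ι → ℝ} {A m : ℝ}
    (hm : 0 < m) (ha : ∀ i ∈ s, 0 ≤ a i) (haA : ∀ i ∈ s, a i ≤ A) (hμ : ∀ i ∈ s, m ≤ μ i) :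
    ∑ i ∈ s, Real.log (1 + a i / μ i) ≤ #s * Real.log (1 + A / m) := by
  rw [← nsmul_eq_mul, ← sum_const]
  refine sum_le_sum fun i hi => Real.log_le_log ?_ ?_
  · have := div_nonneg (ha i hi) (hm.trans_le (hμ i hi)).le
    linarith
  · gcongr
    · exact (ha i hi).trans (haA i hi)
    · exact haA i hi
    · exact hμ i hi

theorem sum_log_one_add_div_le_sum_div {ι : Type*} (s : Finset ι) {a μ : ι → ℝ} {m : ℝ}
    (hm : 0 < m) (ha : ∀ i ∈ s, 0 ≤ a i) (hμ : ∀ i ∈ s, m ≤ μ i) :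
    ∑ i ∈ s, Real.log (1 + a i / μ i) ≤ (∑ i ∈ s, a i) / m := by
  rw [sum_div]
  refine sum_le_sum fun i hi => ?_
  have hterm : 0 < 1 + a i / μ i := by
    have := div_nonneg (ha i hi) (hm.trans_le (hμ i hi)).le
    linarith
  calc Real.log (1 + a i / μ i) ≤ a i / μ i := by
        simpa using Real.log_le_sub_one_of_pos hterm
    _ ≤ a i / m := div_le_div_of_nonneg_left (ha i hi) hm (hμ i hi)

theorem sum_log_one_add_div_le_two_mul_log {N : ℕ} {lam T : ℝ} (hlam : 0 < lam) (hT : 0 < T)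
    {lamSeq : ℕ → ℝ} (hfirst : lamSeq 1 = lam)
    (hmono : ∀ i j : ℕ, 1 ≤ i → i ≤ j → j ≤ N → lamSeq i ≤ lamSeq j)
    {s : Fin N → ℝ} (hs : ∀ i, 0 ≤ s i) (hsT : ∑ i, s i ≤ T) {d : ℕ}
    (hdmax : ∀ d' : ℕ, 1 ≤ d' → d' ≤ N →
      ((d' : ℝ) - 1) * lamSeq d' ≤ T / Real.log (1 + T / lam) → d' ≤ d) :
    ∑ i : Fin N, Real.log (1 + s i / lamSeq ((i : ℕ) + 1)) ≤ 2 * d * Real.log (1 + T / lam) := by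
  set L := Real.log (1 + T / lam)
  have hL : 0 < L := Real.log_pos (by have := div_pos hT hlam; linarith)
  have hlam_le : ∀ j, 1 ≤ j → j ≤ N → lam ≤ lamSeq j := fun j hj hjN =>
    hfirst ▸ hmono 1 j le_rfl hj hjN
  set g : Fin N → ℝ := fun i => Real.log (1 + s i / lamSeq ((i : ℕ) + 1))
  have head : ∑ i ∈ univ.filter fun i : Fin N => (i : ℕ) < d, g i ≤ d * L := calc
    _ ≤ #{i : Fin N | (i : ℕ) < d} * L :=
        sum_log_one_add_div_le_card_mul _ hlam (fun i _ => hs i)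
          (fun i _ => (single_le_sum (fun j _ => hs j) (mem_univ i)).trans hsT)
          (fun i _ => hlam_le _ (by omega) i.isLt)
    _ ≤ d * L := by
        gcongr
        rw [Fin.card_filter_val_lt]
        exact_mod_cast min_le_right N d
  have tail : ∑ i ∈ univ.filter fun i : Fin N => ¬(i : ℕ) < d, g i ≤ d * L := by
    rcases lt_or_ge d N with hdN | hNd
    · have hnext : T / L < d * lamSeq (d + 1) := by
        have := mt (hdmax (d + 1) (by omega) hdN) (by omega)
        push_cast at this
        linarith
      have hpos : 0 < lamSeq (d + 1) := hlam.trans_le (hlam_le _ (by omega) hdN)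
      calc _ ≤ (∑ i ∈ univ.filter fun i : Fin N => ¬(i : ℕ) < d, s i) / lamSeq (d + 1) :=
            sum_log_one_add_div_le_sum_div _ hpos (fun i _ => hs i)
              (fun i hi => hmono _ _ (by omega) (by simp at hi; omega) i.isLt)
        _ ≤ T / lamSeq (d + 1) := by
            gcongr
            exact (sum_le_sum_of_subset_of_nonneg (filter_subset _ _) fun i _ _ => hs i).trans hsT
        _ ≤ d * L := by
            rw [div_lt_iff₀ hL] at hnext
            rw [div_le_iff₀ hpos]
            linarith
    · rw [filter_false_of_mem fun i _ => by omega, sum_empty]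
      positivity
  calc _ = _ + _ := (sum_filter_add_sum_filter_not _ _ _).symm
    _ ≤ d * L + d * L := add_le_add head tail
    _ = 2 * d * L := by ring

theorem statement4_general {N : ℕ} (lam : ℝ) (hlam : 0 < lam) (lamSeq : ℕ → ℝ)
    (hfirst : lamSeq 1 = lam)
    (hmono : ∀ i j : ℕ, 1 ≤ i → i ≤ j → j ≤ N → lamSeq i ≤ lamSeq j)
    (T : ℕ) (hT : 1 ≤ T)
    (x : ℕ → Fin N → ℝ)
    (hx : ∀ t ∈ Finset.Icc 1 T, Real.sqrt (∑ i, x t i ^ 2) ≤ 1)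
    (d : ℕ)
    (hdmax : ∀ d' : ℕ, 1 ≤ d' → d' ≤ N →
      ((d' : ℝ) - 1) * lamSeq d' ≤ (T : ℝ) / Real.log (1 + T / lam) → d' ≤ d) :
    Real.log
        ((Matrix.diagonal (fun i : Fin N => lamSeq ((i : ℕ) + 1)) +
            ∑ t ∈ Finset.Icc 1 T, Matrix.vecMulVec (x t) (x t)).det /
          (Matrix.diagonal (fun i : Fin N => lamSeq ((i : ℕ) + 1))).det) ≤
      2 * d * Real.log (1 + T / lam) := by
  have hS : (∑ t ∈ Finset.Icc 1 T, vecMulVec (x t) (x t)).PosSemidef :=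
    posSemidef_sum _ fun t _ => by simpa using posSemidef_vecMulVec_self_star (x t)
  have hlamSeq : ∀ i : Fin N, 0 < lamSeq ((i : ℕ) + 1) := fun i =>
    hlam.trans_le (hfirst ▸ hmono 1 _ le_rfl (by omega) i.isLt)
  refine (log_det_diagonal_add_div_le_sum hlamSeq hS).trans ?_
  refine sum_log_one_add_div_le_two_mul_log hlam (by exact_mod_cast hT) hfirst hmono
    (fun i => hS.diag_nonneg) ?_ hdmax
  have htrace := trace_sum_vecMulVec_self_le_card _ x hx
  rwa [Nat.card_Icc, add_tsub_cancel_right] at htrace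

/-- Let `λ > 0`, `Λ = diag(λ₁,…,λ_N)` with `λ = λ₁ ≤ ⋯ ≤ λ_N`, `T ∈ ℕ`,
`x₁,…,x_T ∈ ℝ^N` with `‖x_t‖₂ ≤ 1`, and `V_{T+1} = Λ + ∑_{t=1}^T x_t x_tᵀ`. If `d` is the
effective dimension (the largest `d ∈ {1,…,N}` with `(d−1)λ_d ≤ T/log(1+T/λ)`), then
`log(det(V_{T+1})/det(Λ)) ≤ 2·d·log(1 + T/λ)`. -/
theorem statement4 {N : ℕ} (lam : ℝ) (hlam : 0 < lam) (lamSeq : ℕ → ℝ)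
    (hfirst : lamSeq 1 = lam)
    (hmono : ∀ i j : ℕ, 1 ≤ i → i ≤ j → j ≤ N → lamSeq i ≤ lamSeq j)
    (T : ℕ) (hT : 1 ≤ T)
    (x : ℕ → Fin N → ℝ)
    (hx : ∀ t ∈ Finset.Icc 1 T, Real.sqrt (∑ i, x t i ^ 2) ≤ 1)
    (d : ℕ) (hd1 : 1 ≤ d) (hdN : d ≤ N)
    (hdle : ((d : ℝ) - 1) * lamSeq d ≤ (T : ℝ) / Real.log (1 + T / lam))
    (hdmax : ∀ d' : ℕ, 1 ≤ d' → d' ≤ N →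
      ((d' : ℝ) - 1) * lamSeq d' ≤ (T : ℝ) / Real.log (1 + T / lam) → d' ≤ d) :
    Real.log
        ((Matrix.diagonal (fun i : Fin N => lamSeq ((i : ℕ) + 1)) +
            ∑ t ∈ Finset.Icc 1 T, Matrix.vecMulVec (x t) (x t)).det /
          (Matrix.diagonal (fun i : Fin N => lamSeq ((i : ℕ) + 1))).det) ≤
      2 * d * Real.log (1 + T / lam) :=
  statement4_general lam hlam lamSeq hfirst hmono T hT x hx d hdmax
end

section
/- Let λ > 0, let Λ = diag(λ₁,…,λ_N) be diagonal with λ = λ₁ ≤ λ₂ ≤ ⋯ ≤ λ_N, let T ∈ ℕ with effective dimension d, and let x₁,…,x_T ∈ ℝ^N with ‖x_t‖₂ ≤ 1 for all t. Define V_t = Λ + Σ_{i=1}^{t−1} xᵢxᵢᵀ. Then for every β ≥ 0, Σ_{t=1}^{T} min{2, 2β·‖x_t‖_{V_t^{−1}}} ≤ 4(1+β)·√(T·d·log(1 + T/λ)). -/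
/-!
Write `u_t = ‖x_t‖²_{V_t⁻¹}` and `s_i = ∑_t x_{t,i}²`. The matrix determinant lemma telescopes
to `det V_{T+1} = det Λ · ∏_t (1 + u_t)`, and Hadamard's inequality bounds `det V_{T+1}` by the
product `∏_i (λ_i + s_i)` of its diagonal entries, so `∑_t log (1 + u_t) ≤ ∑_i log (1 + s_i/λ_i)`.
Each of the first `d` coordinates contributes at most `L = log (1 + T/λ)`. Beyond `d`, maximality
of `d` gives `λ_i > T/(d L)`, so `log (1 + s_i/λ_i) ≤ s_i/λ_i < s_i d L / T`, and `∑ s_i ≤ T`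
bounds these coordinates by `d L` in total. Finally `min{2, 2β√u} ≤ 2(1+β)√(min{1,u})`,
`min{1,u} ≤ 2 log (1 + u)` and Cauchy–Schwarz give the bound.
-/

open Matrix Finset

theorem Real.prod_le_one_of_sum_eq_card {ι : Type*} (s : Finset ι) {μ : ι → ℝ}
    (hμ : ∀ i ∈ s, 0 ≤ μ i) (hsum : ∑ i ∈ s, μ i = #s) : ∏ i ∈ s, μ i ≤ 1 := by
  by_cases hzero : ∃ i ∈ s, μ i = 0
  · rw [prod_eq_zero_iff.mpr hzero]
    exact zero_le_one
  push Not at hzero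
  have hpos : ∀ i ∈ s, 0 < μ i := fun i hi => (hμ i hi).lt_of_ne' (hzero i hi)
  have hlog : Real.log (∏ i ∈ s, μ i) ≤ 0 := by
    rw [Real.log_prod fun i hi => (hpos i hi).ne']
    calc ∑ i ∈ s, Real.log (μ i) ≤ ∑ i ∈ s, (μ i - 1) :=
          sum_le_sum fun i hi => Real.log_le_sub_one_of_pos (hpos i hi)
      _ = 0 := by simp [sum_sub_distrib, hsum]
  exact (Real.log_nonpos_iff (prod_pos hpos).le).mp hlog

section Determinant

variable {n : Type*} [Fintype n] [DecidableEq n]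

theorem Matrix.PosSemidef.det_le_one_of_diag_eq_one {A : Matrix n n ℝ} (hA : A.PosSemidef)
    (hdiag : ∀ i, A i i = 1) : A.det ≤ 1 := by
  have htrace : ∑ i, hA.1.eigenvalues i = Fintype.card n := by
    have := hA.1.trace_eq_sum_eigenvalues
    simp_all [Matrix.trace]
  rw [hA.1.det_eq_prod_eigenvalues]
  exact_mod_cast Real.prod_le_one_of_sum_eq_card univ (fun i _ => hA.eigenvalues_nonneg i) htrace

theorem Matrix.PosDef.det_le_prod_diag {A : Matrix n n ℝ} (hA : A.PosDef) :
    A.det ≤ ∏ i, A i i := by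
  set D : Matrix n n ℝ := diagonal fun i => (√(A i i))⁻¹
  have hsqrt : ∀ i, √(A i i) ^ 2 = A i i := fun i => Real.sq_sqrt hA.diag_pos.le
  have hnormalized : (D * A * D).PosSemidef := by
    simpa [D, diagonal_conjTranspose] using hA.posSemidef.mul_mul_conjTranspose_same D
  have hdiag : ∀ i, (D * A * D) i i = 1 := fun i => by
    have := hsqrt i
    have : √(A i i) ≠ 0 := (Real.sqrt_pos.mpr hA.diag_pos).ne'
    simp only [D, mul_diagonal, diagonal_mul]
    field_simp
    linarith
  have hdet : (D * A * D).det = A.det / ∏ i, A i i := by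
    have : (∏ i, √(A i i)) ^ 2 = ∏ i, A i i := by rw [← prod_pow]; simp only [hsqrt]
    simp only [D, det_mul, det_diagonal, prod_inv_distrib, ← this]
    ring
  rw [← div_le_one (prod_pos fun i _ => hA.diag_pos), ← hdet]
  exact hnormalized.det_le_one_of_diag_eq_one hdiag

theorem Matrix.det_add_vecMulVec_s11 {R : Type*} [CommRing R] {A : Matrix n n R} (hA : IsUnit A.det)
    (u v : n → R) : (A + vecMulVec u v).det = A.det * (1 + v ⬝ᵥ A⁻¹ *ᵥ u) := by
  rw [vecMulVec_eq Unit, det_add_replicateCol_mul_replicateRow hA]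
  congr 1
  rw [det_unique]
  simp only [add_apply, one_apply_eq, Matrix.mul_apply, replicateRow_apply, replicateCol_apply,
    dotProduct, mulVec, Finset.mul_sum, Finset.sum_mul, mul_assoc]
  rw [Finset.sum_comm]

end Determinant

section DesignMatrix

variable {n : Type*} [DecidableEq n]

def designMatrix (μ : n → ℝ) (x : ℕ → n → ℝ) (t : ℕ) : Matrix n n ℝ :=
  diagonal μ + ∑ i ∈ Icc 1 (t - 1), vecMulVec (x i) (x i)

variable {μ : n → ℝ} (x : ℕ → n → ℝ)

theorem designMatrix_succ {t : ℕ} (ht : 1 ≤ t) :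
    designMatrix μ x (t + 1) = designMatrix μ x t + vecMulVec (x t) (x t) := by
  obtain ⟨k, rfl⟩ := Nat.exists_eq_add_of_le' ht
  rw [designMatrix, designMatrix, Nat.add_sub_cancel, Nat.add_sub_cancel,
    sum_Icc_succ_top (Nat.le_add_left 1 k), add_assoc]

theorem designMatrix_apply_self (T : ℕ) (i : n) :
    designMatrix μ x (T + 1) i i = μ i + ∑ t ∈ Icc 1 T, x t i ^ 2 := by
  simp [designMatrix, Matrix.sum_apply, vecMulVec_apply, sq]

variable [Fintype n]

theorem posDef_designMatrix (hμ : ∀ i, 0 < μ i) (t : ℕ) : (designMatrix μ x t).PosDef :=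
  (PosDef.diagonal hμ).add_posSemidef <| posSemidef_sum _ fun i _ => by
    simpa using posSemidef_vecMulVec_self_star (x i)

theorem dotProduct_inv_designMatrix_mulVec_nonneg (hμ : ∀ i, 0 < μ i) (t : ℕ) :
    0 ≤ x t ⬝ᵥ (designMatrix μ x t)⁻¹ *ᵥ x t := by
  simpa using (posDef_designMatrix x hμ t).inv.posSemidef.dotProduct_mulVec_nonneg (x t)

theorem det_designMatrix_succ (hμ : ∀ i, 0 < μ i) (T : ℕ) :
    (designMatrix μ x (T + 1)).det =
      (∏ i, μ i) * ∏ t ∈ Icc 1 T, (1 + x t ⬝ᵥ (designMatrix μ x t)⁻¹ *ᵥ x t) := by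
  induction T with
  | zero => simp [designMatrix]
  | succ T ih =>
    rw [designMatrix_succ x (Nat.le_add_left 1 T),
      det_add_vecMulVec_s11 (posDef_designMatrix x hμ _).det_pos.ne'.isUnit, ih,
      prod_Icc_succ_top (Nat.le_add_left 1 T), mul_assoc]

theorem sum_log_one_add_potential_le (hμ : ∀ i, 0 < μ i) (T : ℕ) :
    ∑ t ∈ Icc 1 T, Real.log (1 + x t ⬝ᵥ (designMatrix μ x t)⁻¹ *ᵥ x t) ≤
      ∑ i, Real.log (1 + (∑ t ∈ Icc 1 T, x t i ^ 2) / μ i) := by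
  have hpot := dotProduct_inv_designMatrix_mulVec_nonneg x hμ
  have hprod : (∏ i, μ i) * ∏ t ∈ Icc 1 T, (1 + x t ⬝ᵥ (designMatrix μ x t)⁻¹ *ᵥ x t) ≤
      (∏ i, μ i) * ∏ i, (1 + (∑ t ∈ Icc 1 T, x t i ^ 2) / μ i) := by
    rw [← det_designMatrix_succ x hμ, ← prod_mul_distrib]
    refine (posDef_designMatrix x hμ _).det_le_prod_diag.trans_eq (prod_congr rfl fun i _ => ?_)
    rw [designMatrix_apply_self]
    field_simp [(hμ i).ne']
  have hpos : ∀ i, 0 < 1 + (∑ t ∈ Icc 1 T, x t i ^ 2) / μ i := fun i => by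
    have := (hμ i).le
    positivity
  rw [← Real.log_prod fun t _ => by linarith [hpot t], ← Real.log_prod fun i _ => (hpos i).ne']
  exact Real.log_le_log (prod_pos fun t _ => by linarith [hpot t])
    (le_of_mul_le_mul_left hprod (prod_pos fun i _ => hμ i))

end DesignMatrix

theorem lt_mul_of_maximal_effectiveDim {N d k : ℕ} {lamSeq : ℕ → ℝ} {B : ℝ}
    (hmono : ∀ i j : ℕ, 1 ≤ i → i ≤ j → j ≤ N → lamSeq i ≤ lamSeq j)
    (hdmax : ∀ d' : ℕ, 1 ≤ d' → d' ≤ N → ((d' : ℝ) - 1) * lamSeq d' ≤ B → d' ≤ d)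
    (hdk : d < k) (hkN : k ≤ N) : B < d * lamSeq k := by
  have hnext : B < d * lamSeq (d + 1) := by
    by_contra! h
    have := hdmax (d + 1) (Nat.le_add_left 1 d) (by omega) (by push_cast; linarith)
    omega
  exact hnext.trans_le (by gcongr; exact hmono _ _ (Nat.le_add_left 1 d) hdk hkN)

theorem Real.log_one_add_div_le_of_lt_mul {s μ T K : ℝ} (hs : 0 ≤ s) (hμ : 0 < μ) (hT : 0 < T)
    (hTK : T < K * μ) : Real.log (1 + s / μ) ≤ s * (K / T) :=
  calc Real.log (1 + s / μ) ≤ s / μ := by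
        linarith [Real.log_le_sub_one_of_pos (by positivity : 0 < 1 + s / μ)]
    _ = s * (1 / μ) := by ring
    _ ≤ s * (K / T) :=
        mul_le_mul_of_nonneg_left ((div_le_div_iff₀ hμ hT).mpr (by linarith)) hs

theorem sum_log_one_add_div_le {N d : ℕ} {μ s : Fin N → ℝ} {lam T : ℝ} (hlam : 0 < lam)
    (hT : 0 < T) (hμ : ∀ i, lam ≤ μ i) (hs : ∀ i, 0 ≤ s i) (hsum : ∑ i, s i ≤ T)
    (htail : ∀ i : Fin N, d ≤ (i : ℕ) → T / Real.log (1 + T / lam) < d * μ i) :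
    ∑ i, Real.log (1 + s i / μ i) ≤ 2 * d * Real.log (1 + T / lam) := by
  set L := Real.log (1 + T / lam)
  have hL : 0 < L := Real.log_pos (by linarith [div_pos hT hlam])
  have hμpos : ∀ i, 0 < μ i := fun i => hlam.trans_le (hμ i)
  have hterm : ∀ i, Real.log (1 + s i / μ i) ≤
      (if (i : ℕ) < d then L else 0) + s i * (d * L / T) := by
    intro i
    have hsi := hs i
    split_ifs with hi
    · have hsT : s i ≤ T := (single_le_sum (fun j _ => hs j) (mem_univ i)).trans hsum
      have hhead : Real.log (1 + s i / μ i) ≤ L :=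
        Real.log_le_log (by have := hμpos i; positivity) (by gcongr; exact hμ i)
      have : 0 ≤ s i * (d * L / T) := by positivity
      linarith
    · have hTK : T < d * L * μ i := by
        have := (div_lt_iff₀ hL).mp (htail i (not_lt.mp hi))
        linarith
      simpa using Real.log_one_add_div_le_of_lt_mul hsi (hμpos i) hT hTK
  calc ∑ i, Real.log (1 + s i / μ i)
      ≤ ∑ i : Fin N, ((if (i : ℕ) < d then L else 0) + s i * (d * L / T)) :=
        sum_le_sum fun i _ => hterm i
    _ = #{i : Fin N | (i : ℕ) < d} * L + (∑ i, s i) * (d * L / T) := by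
        rw [sum_add_distrib, sum_ite, sum_const_zero, add_zero, sum_const, nsmul_eq_mul, sum_mul]
    _ ≤ d * L + T * (d * L / T) := by
        gcongr
        rw [Fin.card_filter_val_lt]
        exact_mod_cast min_le_right _ _
    _ = 2 * d * L := by field_simp; ring

theorem Real.min_one_le_two_mul_log_one_add {u : ℝ} (hu : 0 ≤ u) :
    min 1 u ≤ 2 * Real.log (1 + u) := by
  refine le_trans ?_ (mul_le_mul_of_nonneg_left (Real.le_log_one_add_of_nonneg hu) zero_le_two)
  rw [mul_div_assoc', le_div_iff₀ (by linarith)]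
  rcases le_total u 1 with h | h
  · rw [min_eq_right h]
    nlinarith
  · rw [min_eq_left h]
    linarith

theorem min_two_le_mul_sqrt_min_one {β : ℝ} (hβ : 0 ≤ β) (u : ℝ) :
    min 2 (2 * β * √u) ≤ 2 * (1 + β) * √(min 1 u) := by
  rcases le_total u 1 with h | h
  · rw [min_eq_right h]
    exact (min_le_right _ _).trans (by nlinarith [Real.sqrt_nonneg u])
  · rw [min_eq_left h, Real.sqrt_one]
    exact (min_le_left _ _).trans (by linarith)

theorem Real.sum_sqrt_le_sqrt_card_mul_sum {ι : Type*} (s : Finset ι) {f : ι → ℝ}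
    (hf : ∀ i ∈ s, 0 ≤ f i) : ∑ i ∈ s, √(f i) ≤ √(#s * ∑ i ∈ s, f i) := by
  refine Real.le_sqrt_of_sq_le (sq_sum_le_card_mul_sum_sq.trans_eq ?_)
  rw [sum_congr rfl fun i hi => Real.sq_sqrt (hf i hi)]

theorem sum_min_two_mul_sqrt_le {ι : Type*} (s : Finset ι) {u : ι → ℝ} (hu : ∀ i ∈ s, 0 ≤ u i)
    {β B : ℝ} (hβ : 0 ≤ β) (hB : ∑ i ∈ s, Real.log (1 + u i) ≤ B) :
    ∑ i ∈ s, min 2 (2 * β * √(u i)) ≤ 2 * (1 + β) * √(#s * (2 * B)) := by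
  have hmin : ∑ i ∈ s, min 1 (u i) ≤ 2 * B :=
    calc ∑ i ∈ s, min 1 (u i) ≤ ∑ i ∈ s, 2 * Real.log (1 + u i) :=
          sum_le_sum fun i hi => Real.min_one_le_two_mul_log_one_add (hu i hi)
      _ ≤ 2 * B := by rw [← mul_sum]; linarith
  calc ∑ i ∈ s, min 2 (2 * β * √(u i)) ≤ ∑ i ∈ s, 2 * (1 + β) * √(min 1 (u i)) :=
        sum_le_sum fun i _ => min_two_le_mul_sqrt_min_one hβ (u i)
    _ = 2 * (1 + β) * ∑ i ∈ s, √(min 1 (u i)) := by rw [mul_sum]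
    _ ≤ 2 * (1 + β) * √(#s * ∑ i ∈ s, min 1 (u i)) := by
        gcongr
        exact Real.sum_sqrt_le_sqrt_card_mul_sum s fun i hi => le_min zero_le_one (hu i hi)
    _ ≤ 2 * (1 + β) * √(#s * (2 * B)) := by gcongr

theorem statement11_general {N : ℕ} (lam : ℝ) (hlam : 0 < lam) (lamSeq : ℕ → ℝ)
    (hfirst : lamSeq 1 = lam)
    (hmono : ∀ i j : ℕ, 1 ≤ i → i ≤ j → j ≤ N → lamSeq i ≤ lamSeq j)
    (T : ℕ) (hT : 1 ≤ T)
    (x : ℕ → Fin N → ℝ)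
    (hx : ∀ t ∈ Finset.Icc 1 T, Real.sqrt (∑ i, x t i ^ 2) ≤ 1)
    (d : ℕ)
    (hdmax : ∀ d' : ℕ, 1 ≤ d' → d' ≤ N →
      ((d' : ℝ) - 1) * lamSeq d' ≤ (T : ℝ) / Real.log (1 + T / lam) → d' ≤ d)
    (β : ℝ) (hβ : 0 ≤ β) :
    let V : ℕ → Matrix (Fin N) (Fin N) ℝ := fun t =>
      Matrix.diagonal (fun i : Fin N => lamSeq ((i : ℕ) + 1)) +
        ∑ i ∈ Finset.Icc 1 (t - 1), Matrix.vecMulVec (x i) (x i)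
    ∑ t ∈ Finset.Icc 1 T, min 2 (2 * β * Real.sqrt (x t ⬝ᵥ ((V t)⁻¹ *ᵥ x t))) ≤
      4 * (1 + β) * Real.sqrt (T * d * Real.log (1 + T / lam)) := by
  intro V
  have hμ : ∀ i : Fin N, lam ≤ lamSeq (i + 1) := fun i =>
    hfirst ▸ hmono 1 _ le_rfl (by omega) (by omega)
  have hμpos : ∀ i : Fin N, 0 < lamSeq (i + 1) := fun i => hlam.trans_le (hμ i)
  have hsum : ∑ i, ∑ t ∈ Icc 1 T, x t i ^ 2 ≤ T := by
    rw [sum_comm]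
    refine (sum_le_sum fun t ht => Real.sqrt_le_one.mp (hx t ht)).trans_eq ?_
    simp
  have hcoord := sum_log_one_add_div_le hlam (by exact_mod_cast hT) hμ
    (fun i => sum_nonneg fun t _ => sq_nonneg (x t i)) hsum
    fun i hi => lt_mul_of_maximal_effectiveDim hmono hdmax (by omega) (by omega)
  have hbound := sum_min_two_mul_sqrt_le (Icc 1 T)
    (fun t _ => dotProduct_inv_designMatrix_mulVec_nonneg x hμpos t) hβ
    ((sum_log_one_add_potential_le x hμpos T).trans hcoord)
  refine hbound.trans_eq ?_
  rw [Nat.card_Icc, Nat.add_sub_cancel, show (T : ℝ) * (2 * (2 * d * Real.log (1 + T / lam))) =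
    2 ^ 2 * (T * d * Real.log (1 + T / lam)) by ring, Real.sqrt_mul (by positivity),
    Real.sqrt_sq zero_le_two]
  ring

/-- Let `λ > 0`, `Λ = diag(λ₁,…,λ_N)` with `λ = λ₁ ≤ ⋯ ≤ λ_N`, `T ∈ ℕ`
with effective dimension `d`, and `x₁,…,x_T ∈ ℝ^N` with `‖x_t‖₂ ≤ 1`. With
`V_t = Λ + ∑_{i=1}^{t−1} xᵢxᵢᵀ`, for every `β ≥ 0`,
`∑_{t=1}^T min{2, 2β‖x_t‖_{V_t⁻¹}} ≤ 4(1+β)√(T·d·log(1 + T/λ))`. -/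
theorem statement11 {N : ℕ} (lam : ℝ) (hlam : 0 < lam) (lamSeq : ℕ → ℝ)
    (hfirst : lamSeq 1 = lam)
    (hmono : ∀ i j : ℕ, 1 ≤ i → i ≤ j → j ≤ N → lamSeq i ≤ lamSeq j)
    (T : ℕ) (hT : 1 ≤ T)
    (x : ℕ → Fin N → ℝ)
    (hx : ∀ t ∈ Finset.Icc 1 T, Real.sqrt (∑ i, x t i ^ 2) ≤ 1)
    (d : ℕ) (hd1 : 1 ≤ d) (hdN : d ≤ N)
    (hdle : ((d : ℝ) - 1) * lamSeq d ≤ (T : ℝ) / Real.log (1 + T / lam))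
    (hdmax : ∀ d' : ℕ, 1 ≤ d' → d' ≤ N →
      ((d' : ℝ) - 1) * lamSeq d' ≤ (T : ℝ) / Real.log (1 + T / lam) → d' ≤ d)
    (β : ℝ) (hβ : 0 ≤ β) :
    let V : ℕ → Matrix (Fin N) (Fin N) ℝ := fun t =>
      Matrix.diagonal (fun i : Fin N => lamSeq ((i : ℕ) + 1)) +
        ∑ i ∈ Finset.Icc 1 (t - 1), Matrix.vecMulVec (x i) (x i)
    ∑ t ∈ Finset.Icc 1 T, min 2 (2 * β * Real.sqrt (x t ⬝ᵥ ((V t)⁻¹ *ᵥ x t))) ≤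
      4 * (1 + β) * Real.sqrt (T * d * Real.log (1 + T / lam)) :=
  statement11_general lam hlam lamSeq hfirst hmono T hT x hx d hdmax β hβ
end

section
/- For every integer J ≥ 1, Σ_{j=1}^{J} 2^{j−1}/(J−j+1) ≤ (3/4)·2^J − 1/2. In particular, if T = 2^J, the cumulative cost of CheapUCB, which uses at stage j (time steps 2^{j−1} through 2^j−1) only probes of width J−j+1 each of cost at most 1/(J−j+1), is at most 3T/4 − 1/2. -/
lemma aux12 : ∀ J : ℕ, 1 ≤ J →
    ∑ i ∈ Finset.range J, (2 : ℝ) ^ i / ((J - i : ℕ) : ℝ) ≤ (3 / 4) * 2 ^ J - 1 / 2 := by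
  intro J hJ
  induction J, hJ using Nat.le_induction with
  | base => simp; norm_num
  | succ n hn ih =>
    have hs := Finset.sum_range_succ' (fun i => (2 : ℝ) ^ i / ((n + 1 - i : ℕ) : ℝ)) n
    rw [hs]
    have h1 : ∑ i ∈ Finset.range n, (2 : ℝ) ^ (i + 1) / ((n + 1 - (i + 1) : ℕ) : ℝ)
        = 2 * ∑ i ∈ Finset.range n, (2 : ℝ) ^ i / ((n - i : ℕ) : ℝ) := by
      rw [Finset.mul_sum]
      refine Finset.sum_congr rfl fun i _ => ?_
      rw [Nat.succ_sub_succ, pow_succ]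
      ring
    rw [h1]
    have h2 : (2 : ℝ) ^ 0 / ((n + 1 - 0 : ℕ) : ℝ) ≤ 1 / 2 := by
      simp only [pow_zero, Nat.sub_zero]
      rw [div_le_div_iff₀ (by positivity) (by norm_num)]
      push_cast
      linarith [Nat.one_le_cast (α := ℝ) |>.mpr hn]
    calc 2 * ∑ i ∈ Finset.range n, (2 : ℝ) ^ i / ((n - i : ℕ) : ℝ)
          + (2 : ℝ) ^ 0 / ((n + 1 - 0 : ℕ) : ℝ)
        ≤ 2 * ((3 / 4) * 2 ^ n - 1 / 2) + 1 / 2 := by linarith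
      _ ≤ (3 / 4) * 2 ^ (n + 1) - 1 / 2 := by rw [pow_succ]; ring_nf; linarith

/-- For every integer `J ≥ 1`,
`∑_{j=1}^{J} 2^{j−1}/(J−j+1) ≤ (3/4)·2^J − 1/2`; with `T = 2^J` this bounds the
cumulative cost of CheapUCB by `3T/4 − 1/2`. -/
theorem statement12 (J : ℕ) (hJ : 1 ≤ J) :
    ∑ j ∈ Finset.Icc 1 J, (2 : ℝ) ^ (j - 1) / ((J - j + 1 : ℕ) : ℝ) ≤
      (3 / 4) * 2 ^ J - 1 / 2 := by
  have h := aux12 J hJ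
  rw [show Finset.Icc 1 J = Finset.Ico 1 (J+1) by rfl, Finset.sum_Ico_eq_sum_range]
  refine le_trans (le_of_eq ?_) h
  rw [show J + 1 - 1 = J from rfl]
  refine Finset.sum_congr rfl fun i hi => ?_
  have hi' : i < J := Finset.mem_range.mp hi
  congr 1
  · congr 1
    omega
  · congr 1
    omega
end

section
/- Let J ≥ 2 be an integer, T = 2^J, λ > 0, c′ > 0, and suppose λ_{d+1} > T/(d·log(1 + T/λ)) for a positive integer d and a real λ_{d+1} > 0 (as holds when d is the effective dimension). Then Σ_{j=1}^{J−1} (2^{j−1}·c′·√T·(J−j+1))/λ_{d+1} ≤ c′·d·√(T/4)·log₂(T/2)·log(1 + T/λ). -/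
/-!
Put `n = J - 1`, so `T = 2^(n+1)`. Reindexing by `i = j - 1`, the stage weights sum to
`∑_{i<n} 2^i (n + 1 - i) = 3·2^n - n - 3 ≤ n·2^n = log₂(T/2)·T/2`, and the gap hypothesis says
exactly `T/λ_{d+1} < d·log(1 + T/λ)`; together with `√T/2 = √(T/4)` this is the bound.
-/

open Finset

theorem sum_range_two_pow_mul_eq (n : ℕ) :
    ∑ i ∈ range n, (2 : ℝ) ^ i * (n + 1 - i) = 3 * 2 ^ n - n - 3 := by
  induction n with
  | zero => norm_num
  | succ n ih =>
    have hgeom : ∑ i ∈ range n, (2 : ℝ) ^ i = 2 ^ n - 1 := by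
      rw [geom_sum_eq (by norm_num) n]; norm_num
    calc ∑ i ∈ range (n + 1), (2 : ℝ) ^ i * ((n + 1 : ℕ) + 1 - i)
        = ∑ i ∈ range n, (2 : ℝ) ^ i * (n + 1 - i) + ∑ i ∈ range n, (2 : ℝ) ^ i + 2 ^ n * 2 := by
          rw [sum_range_succ, ← sum_add_distrib]
          push_cast
          congr 1
          · exact sum_congr rfl fun i _ => by ring
          · ring
      _ = 3 * 2 ^ (n + 1) - (n + 1 : ℕ) - 3 := by
          rw [ih, hgeom]; push_cast; ring

theorem sum_range_two_pow_mul_le (n : ℕ) :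
    ∑ i ∈ range n, (2 : ℝ) ^ i * (n + 1 - i) ≤ n * 2 ^ n := by
  rw [sum_range_two_pow_mul_eq]
  rcases le_or_gt n 2 with hn | hn
  · interval_cases n <;> norm_num
  · have : (n : ℝ) ≥ 3 := by exact_mod_cast hn
    nlinarith [pow_pos (two_pos : (0 : ℝ) < 2) n]

theorem sum_Icc_two_pow_mul_le (n : ℕ) :
    ∑ j ∈ Icc 1 n, (2 : ℝ) ^ (j - 1) * ((n + 1 : ℕ) - j + 1) ≤ n * 2 ^ n := by
  rw [← Ico_add_one_right_eq_Icc, sum_Ico_eq_sum_range, Nat.add_sub_cancel]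
  convert sum_range_two_pow_mul_le n using 3 with i
  simp only [Nat.add_sub_cancel_left]
  push_cast
  ring

theorem sqrt_div_four (x : ℝ) : √(x / 4) = √x / 2 := by
  rw [Real.sqrt_div' x (by norm_num), show (4 : ℝ) = 2 ^ 2 by norm_num,
    Real.sqrt_sq (by norm_num)]

theorem logb_two_pow_succ_div_two (n : ℕ) : Real.logb 2 (2 ^ (n + 1) / 2) = n := by
  rw [pow_succ, mul_div_cancel_right₀ _ two_ne_zero, Real.logb_pow,
    Real.logb_self_eq_one one_lt_two, mul_one]

theorem statement14_general (J : ℕ) (hJ : 2 ≤ J) (T lam c' : ℝ) (hT : T = 2 ^ J)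
    (hlam : 0 < lam) (hc' : 0 < c') (d : ℕ) (hd : 0 < d)
    (lamd1 : ℝ)
    (hgap : lamd1 > T / (d * Real.log (1 + T / lam))) :
    ∑ j ∈ Finset.Icc 1 (J - 1),
        (2 : ℝ) ^ (j - 1) * c' * Real.sqrt T * ((J : ℝ) - j + 1) / lamd1 ≤
      c' * d * Real.sqrt (T / 4) * Real.logb 2 (T / 2) * Real.log (1 + T / lam) := by
  obtain ⟨n, rfl⟩ : ∃ n, J = n + 1 := ⟨J - 1, by omega⟩
  subst hT
  set L := Real.log (1 + 2 ^ (n + 1) / lam)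
  have hL : 0 < L := Real.log_pos (lt_add_of_pos_right 1 (by positivity))
  have hdL : (0 : ℝ) < d * L := by positivity
  have hlamd1 : 0 < lamd1 := lt_trans (by positivity) hgap
  have hratio : (2 : ℝ) ^ (n + 1) / lamd1 < d * L := (div_lt_comm₀ hdL hlamd1).mp hgap
  rw [sqrt_div_four, logb_two_pow_succ_div_two, Nat.add_sub_cancel]
  calc ∑ j ∈ Icc 1 n, (2 : ℝ) ^ (j - 1) * c' * √(2 ^ (n + 1)) * ((n + 1 : ℕ) - j + 1) / lamd1
      = c' * √(2 ^ (n + 1)) / lamd1 * ∑ j ∈ Icc 1 n, (2 : ℝ) ^ (j - 1) * ((n + 1 : ℕ) - j + 1) := by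
        rw [mul_sum]; exact sum_congr rfl fun j _ => by ring
    _ ≤ c' * √(2 ^ (n + 1)) / lamd1 * (n * 2 ^ n) := by
        gcongr; exact sum_Icc_two_pow_mul_le n
    _ = c' * (√(2 ^ (n + 1)) / 2) * n * (2 ^ (n + 1) / lamd1) := by ring
    _ ≤ c' * (√(2 ^ (n + 1)) / 2) * n * (d * L) := by gcongr
    _ = c' * d * (√(2 ^ (n + 1)) / 2) * n * L := by ring

/-- Let `J ≥ 2`, `T = 2^J`, `λ > 0`, `c′ > 0`, and suppose
`λ_{d+1} > T/(d·log(1 + T/λ))` for a positive integer `d` and a real `λ_{d+1} > 0`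
(as holds when `d` is the effective dimension). Then
`∑_{j=1}^{J−1} 2^{j−1}·c′·√T·(J−j+1)/λ_{d+1} ≤ c′·d·√(T/4)·log₂(T/2)·log(1 + T/λ)`. -/
theorem statement14 (J : ℕ) (hJ : 2 ≤ J) (T lam c' : ℝ) (hT : T = 2 ^ J)
    (hlam : 0 < lam) (hc' : 0 < c') (d : ℕ) (hd : 0 < d)
    (lamd1 : ℝ) (hlamd1 : 0 < lamd1)
    (hgap : lamd1 > T / (d * Real.log (1 + T / lam))) :
    ∑ j ∈ Finset.Icc 1 (J - 1),
        (2 : ℝ) ^ (j - 1) * c' * Real.sqrt T * ((J : ℝ) - j + 1) / lamd1 ≤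
      c' * d * Real.sqrt (T / 4) * Real.logb 2 (T / 2) * Real.log (1 + T / lam) :=
  statement14_general J hJ T lam c' hT hlam hc' d hd lamd1 hgap
end

section
/- Let G be an undirected graph on N vertices with maximum degree κ, let μ₂ be the second-smallest eigenvalue of its Laplacian L = D − A, and let θ(G) = min{ |∂X|/|X| : X ⊆ V, 1 ≤ |X| ≤ N/2 } be the isoperimetric number, where |∂X| is the number of edges with exactly one endpoint in X. Then μ₂/2 ≤ θ(G) ≤ √(2·κ·μ₂). -/
/-!
Lower bound: the test vector `N·1_X − |X|·1` is orthogonal to the constants, so its Rayleigh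
quotient `N |∂X| / (|X| (N − |X|)) ≤ 2 |∂X| / |X|` is at least `μ₂`.

Upper bound (Cheeger): take an eigenvector `f` of `μ₂` orthogonal to the constants, signed so
that its positive support has at most `N / 2` vertices, and let `g = f⁺`. Then
`gᵀLg ≤ μ₂ ‖g‖²`, and peeling off the level sets of `g²` one at a time gives
`2θ ‖g‖² ≤ ∑_{u∼v} |g_u² − g_v²|`. By Cauchy–Schwarz the right side is at most
`√(2 gᵀLg) · √(4κ ‖g‖²) ≤ 2 ‖g‖² √(2κμ₂)`.
-/

open Matrix Finset SimpleGraph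

section

variable {ι : Type*} [Fintype ι]

theorem exists_pos_of_sum_eq_zero {f : ι → ℝ} (hf : ∑ i, f i = 0) (hf0 : f ≠ 0) :
    ∃ i, 0 < f i := by
  by_contra! h
  exact hf0 (funext fun i => (sum_eq_zero_iff_of_nonpos fun i _ => h i).1 hf i (mem_univ i))

theorem two_mul_card_pos_le_or (f : ι → ℝ) :
    2 * #{i | 0 < f i} ≤ Fintype.card ι ∨ 2 * #{i | 0 < -f i} ≤ Fintype.card ι := by
  classical
  have hdisj : Disjoint ({i | 0 < f i} : Finset ι) ({i | 0 < -f i} : Finset ι) :=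
    disjoint_filter.2 fun i _ h h' => by linarith
  have := card_union_of_disjoint hdisj ▸ card_le_univ (_ ∪ _)
  omega

theorem sum_indicator_eq_card [DecidableEq ι] (X : Finset ι) :
    ∑ i, (if i ∈ X then (1 : ℝ) else 0) = #X := by
  simp

end

namespace Matrix

variable {n : Type*} [Fintype n] {A : Matrix n n ℝ}

theorem exists_ne_zero_mulVec_eq_smul_dotProduct_eq_zero {u w : n → ℝ} {l : ℝ}
    (hu : u ⬝ᵥ u = 1) (hwu : w ⬝ᵥ u = 0) (hw : w ≠ 0) (hAu : A *ᵥ u = l • u)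
    (hAw : A *ᵥ w = l • w) (c : n → ℝ) : ∃ f ≠ 0, A *ᵥ f = l • f ∧ f ⬝ᵥ c = 0 := by
  by_cases hwc : w ⬝ᵥ c = 0
  · exact ⟨w, hw, hAw, hwc⟩
  -- its `u`-coordinate is `w ⬝ᵥ c ≠ 0`
  refine ⟨(w ⬝ᵥ c) • u - (u ⬝ᵥ c) • w, fun h => hwc ?_, ?_, ?_⟩
  · simpa [sub_dotProduct, hu, hwu] using congrArg (· ⬝ᵥ u) h
  · simp only [mulVec_sub, mulVec_smul, hAu, hAw, smul_sub, smul_comm l]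
  · simp only [sub_dotProduct, smul_dotProduct, smul_eq_mul]
    ring

variable [DecidableEq n] {q : n → n → ℝ} {μ : n → ℝ}

theorem sum_dotProduct_smul_of_orthonormal
    (horth : ∀ i j, q i ⬝ᵥ q j = if i = j then (1 : ℝ) else 0) (x : n → ℝ) :
    ∑ i, (q i ⬝ᵥ x) • q i = x := by
  have hQQ : of q * (of q)ᵀ = 1 := by
    ext i j
    simpa [mul_apply, one_apply, dotProduct] using horth i j
  calc ∑ i, (q i ⬝ᵥ x) • q i = (of q)ᵀ *ᵥ (of q *ᵥ x) := by
        rw [mulVec_transpose, vecMul_eq_sum]; rfl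
    _ = x := by rw [mulVec_mulVec, mul_eq_one_comm.mp hQQ, one_mulVec]

theorem eq_smul_of_dotProduct_eq_zero (horth : ∀ i j, q i ⬝ᵥ q j = if i = j then (1 : ℝ) else 0)
    {c : n → ℝ} {i₀ : n} (hc : ∀ i ≠ i₀, q i ⬝ᵥ c = 0) : c = (q i₀ ⬝ᵥ c) • q i₀ := by
  conv_lhs => rw [← sum_dotProduct_smul_of_orthonormal horth c]
  exact sum_eq_single i₀ (fun i _ hi => by rw [hc i hi, zero_smul]) (by simp)

theorem dotProduct_self_eq_sum_sq (horth : ∀ i j, q i ⬝ᵥ q j = if i = j then (1 : ℝ) else 0)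
    (x : n → ℝ) : x ⬝ᵥ x = ∑ i, (q i ⬝ᵥ x) ^ 2 := by
  calc x ⬝ᵥ x = (∑ i, (q i ⬝ᵥ x) • q i) ⬝ᵥ x := by rw [sum_dotProduct_smul_of_orthonormal horth]
    _ = ∑ i, (q i ⬝ᵥ x) ^ 2 := by simp only [sum_dotProduct, smul_dotProduct, smul_eq_mul, sq]

theorem dotProduct_mulVec_eq_sum (horth : ∀ i j, q i ⬝ᵥ q j = if i = j then (1 : ℝ) else 0)
    (heig : ∀ i, A *ᵥ q i = μ i • q i) (x : n → ℝ) :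
    x ⬝ᵥ (A *ᵥ x) = ∑ i, μ i * (q i ⬝ᵥ x) ^ 2 := by
  calc x ⬝ᵥ (A *ᵥ x) = x ⬝ᵥ (A *ᵥ ∑ i, (q i ⬝ᵥ x) • q i) := by
        rw [sum_dotProduct_smul_of_orthonormal horth]
    _ = ∑ i, μ i * (q i ⬝ᵥ x) ^ 2 := by
        rw [mulVec_sum, dotProduct_sum]
        refine sum_congr rfl fun i _ => ?_
        rw [mulVec_smul, heig, dotProduct_smul, dotProduct_smul, dotProduct_comm x, smul_eq_mul,
          smul_eq_mul]
        ring

theorem mul_dotProduct_self_le_dotProduct_mulVec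
    (horth : ∀ i j, q i ⬝ᵥ q j = if i = j then (1 : ℝ) else 0)
    (heig : ∀ i, A *ᵥ q i = μ i • q i) {m : ℝ} {x : n → ℝ}
    (hx : ∀ i, μ i < m → q i ⬝ᵥ x = 0) : m * (x ⬝ᵥ x) ≤ x ⬝ᵥ (A *ᵥ x) := by
  rw [dotProduct_self_eq_sum_sq horth, dotProduct_mulVec_eq_sum horth heig, mul_sum]
  refine sum_le_sum fun i _ => ?_
  rcases lt_or_ge (μ i) m with hi | hi
  · simp [hx i hi]
  · exact mul_le_mul_of_nonneg_right hi (sq_nonneg _)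

end Matrix

namespace SimpleGraph

section

variable {V : Type*} [Fintype V] (G : SimpleGraph V) [DecidableRel G.Adj]

theorem sum_adj_comm (F : V → V → ℝ) :
    ∑ u, ∑ v, (if G.Adj u v then F u v else 0) = ∑ u, ∑ v, if G.Adj u v then F v u else 0 := by
  rw [sum_comm]
  exact sum_congr rfl fun u _ => sum_congr rfl fun v _ => by simp only [G.adj_comm v u]

theorem sum_adj_eq_sum_degree_mul (F : V → ℝ) :
    ∑ u, ∑ v, (if G.Adj u v then F u else 0) = ∑ u, G.degree u * F u := by
  refine sum_congr rfl fun u _ => ?_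
  rw [G.degree_eq_sum_if_adj (R := ℝ) u, sum_mul]
  exact sum_congr rfl fun v _ => by split_ifs <;> simp

theorem sum_adj_mul_le_sqrt_mul_sqrt (F H : V → V → ℝ) :
    ∑ u, ∑ v, (if G.Adj u v then F u v * H u v else 0) ≤
      √(∑ u, ∑ v, if G.Adj u v then F u v ^ 2 else 0) *
        √(∑ u, ∑ v, if G.Adj u v then H u v ^ 2 else 0) := by
  have h := Real.sum_mul_le_sqrt_mul_sqrt univ
    (fun e : V × V => if G.Adj e.1 e.2 then F e.1 e.2 else 0)
    (fun e => if G.Adj e.1 e.2 then H e.1 e.2 else 0)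
  simp only [Fintype.sum_prod_type, ite_zero_mul_ite_zero, and_self, ite_pow, ne_eq,
    OfNat.ofNat_ne_zero, not_false_eq_true, zero_pow] at h
  exact h

theorem sum_adj_add_sq_le {κ : ℕ} (hdeg : ∀ v, G.degree v ≤ κ) (g : V → ℝ) :
    ∑ u, ∑ v, (if G.Adj u v then (g u + g v) ^ 2 else 0) ≤ 4 * κ * ∑ v, g v ^ 2 := by
  have hsymm := G.sum_adj_comm fun u _ => 2 * g u ^ 2
  calc ∑ u, ∑ v, (if G.Adj u v then (g u + g v) ^ 2 else 0)
      ≤ ∑ u, ∑ v, ((if G.Adj u v then 2 * g u ^ 2 else 0) + if G.Adj u v then 2 * g v ^ 2 else 0) :=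
        sum_le_sum fun u _ => sum_le_sum fun v _ => by
          split_ifs
          · nlinarith [sq_nonneg (g u - g v)]
          · simp
    _ = 2 * ∑ u, G.degree u * (2 * g u ^ 2) := by
        simp only [sum_add_distrib, ← hsymm, G.sum_adj_eq_sum_degree_mul]
        ring
    _ ≤ 2 * ∑ u, (κ : ℝ) * (2 * g u ^ 2) := by
        gcongr with u
        exact_mod_cast hdeg u
    _ = 4 * κ * ∑ v, g v ^ 2 := by
        rw [← mul_sum, ← mul_sum]
        ring

variable [DecidableEq V]

def edgeBoundary (X : Finset V) : Finset (V × V) :=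
  univ.filter fun e => G.Adj e.1 e.2 ∧ e.1 ∈ X ∧ e.2 ∉ X

theorem dotProduct_lapMatrix_mulVec (x : V → ℝ) :
    x ⬝ᵥ (G.lapMatrix ℝ *ᵥ x) = (∑ u, ∑ v, if G.Adj u v then (x u - x v) ^ 2 else 0) / 2 := by
  rw [← toLinearMap₂'_apply', lapMatrix_toLinearMap₂']

theorem sum_eq_zero_of_lapMatrix_mulVec_eq_smul {x : V → ℝ} {m : ℝ}
    (hx : G.lapMatrix ℝ *ᵥ x = m • x) (hm : m ≠ 0) : ∑ v, x v = 0 := by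
  have h : m * ∑ v, x v = 0 := by
    rw [← dotProduct_one, ← smul_eq_mul, ← smul_dotProduct, ← hx, dotProduct_comm,
      dotProduct_mulVec, ← mulVec_transpose, (G.isSymm_lapMatrix ℝ).eq]
    exact (congrArg (· ⬝ᵥ x) (G.lapMatrix_mulVec_const_eq_zero)).trans (zero_dotProduct x)
  exact (mul_eq_zero.1 h).resolve_left hm

theorem nonneg_of_lapMatrix_mulVec_eq_smul {x : V → ℝ} {m : ℝ}
    (hx : G.lapMatrix ℝ *ᵥ x = m • x) (hxx : x ⬝ᵥ x = 1) : 0 ≤ m := by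
  have h : x ⬝ᵥ (G.lapMatrix ℝ *ᵥ x) = m := by
    rw [hx, dotProduct_smul, hxx, smul_eq_mul, mul_one]
  rw [← h, dotProduct_lapMatrix_mulVec]
  positivity

theorem card_edgeBoundary_eq_sum (X : Finset V) :
    (#(G.edgeBoundary X) : ℝ) =
      ∑ u, ∑ v, if G.Adj u v then (if u ∈ X ∧ v ∉ X then 1 else 0) else 0 := by
  rw [edgeBoundary, card_filter, Nat.cast_sum, Fintype.sum_prod_type]
  simp only [Nat.cast_ite, Nat.cast_one, Nat.cast_zero, ite_and]

theorem sum_adj_abs_sub_indicator (X : Finset V) :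
    ∑ u, ∑ v, (if G.Adj u v then
        |(if u ∈ X then (1 : ℝ) else 0) - if v ∈ X then 1 else 0| else 0) =
      2 * #(G.edgeBoundary X) := by
  have hsymm := G.sum_adj_comm fun u v => if u ∈ X ∧ v ∉ X then (1 : ℝ) else 0
  calc _ = ∑ u, ∑ v, ((if G.Adj u v then (if u ∈ X ∧ v ∉ X then (1 : ℝ) else 0) else 0) +
        if G.Adj u v then (if v ∈ X ∧ u ∉ X then 1 else 0) else 0) :=
        sum_congr rfl fun u _ => sum_congr rfl fun v _ => by
          by_cases hu : u ∈ X <;> by_cases hv : v ∈ X <;> split_ifs <;> simp_all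
    _ = _ := by
        simp only [sum_add_distrib]
        rw [← hsymm, card_edgeBoundary_eq_sum]
        ring

theorem dotProduct_lapMatrix_mulVec_indicator (c d : ℝ) (X : Finset V) :
    let x : V → ℝ := fun v => c * (if v ∈ X then 1 else 0) - d
    x ⬝ᵥ (G.lapMatrix ℝ *ᵥ x) = c ^ 2 * #(G.edgeBoundary X) := by
  intro x
  have hx : ∀ u v, (x u - x v) ^ 2 =
      c ^ 2 * |(if u ∈ X then (1 : ℝ) else 0) - if v ∈ X then 1 else 0| := by
    intro u v
    rw [sub_sub_sub_cancel_right, ← mul_sub, mul_pow]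
    split_ifs <;> norm_num
  simp only [dotProduct_lapMatrix_mulVec, hx, ← mul_ite_zero, ← mul_sum,
    sum_adj_abs_sub_indicator]
  ring

theorem mul_card_le_two_mul_card_edgeBoundary {m : ℝ} (hm : 0 ≤ m)
    (hray : ∀ x : V → ℝ, ∑ v, x v = 0 → m * (x ⬝ᵥ x) ≤ x ⬝ᵥ (G.lapMatrix ℝ *ᵥ x))
    {X : Finset V} (hX : 2 * #X ≤ Fintype.card V) : m * #X ≤ 2 * #(G.edgeBoundary X) := by
  set n : ℝ := (Fintype.card V : ℝ)
  set k : ℝ := (#X : ℝ)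
  set B : ℝ := (#(G.edgeBoundary X) : ℝ)
  set x : V → ℝ := fun v => n * (if v ∈ X then 1 else 0) - k
  have hsum : ∑ v, x v = 0 := by
    simp only [x, sum_sub_distrib, ← mul_sum, sum_indicator_eq_card, sum_const, card_univ,
      nsmul_eq_mul]
    ring
  have hxx : x ⬝ᵥ x = n * k * (n - k) := by
    have hx : ∀ v, x v * x v = (n ^ 2 - 2 * n * k) * (if v ∈ X then 1 else 0) + k ^ 2 := by
      intro v; by_cases hv : v ∈ X <;> simp [x, hv] <;> ring
    simp only [dotProduct, hx, sum_add_distrib, ← mul_sum, sum_indicator_eq_card, sum_const,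
      card_univ, nsmul_eq_mul]
    ring
  have hxLx : x ⬝ᵥ (G.lapMatrix ℝ *ᵥ x) = n ^ 2 * B := G.dotProduct_lapMatrix_mulVec_indicator n k X
  have h := hray x hsum
  rw [hxx, hxLx] at h
  rcases X.eq_empty_or_nonempty with rfl | hXne
  · simp only [k, card_empty, Nat.cast_zero, mul_zero]
    positivity
  have hn : 0 < n := by
    have : 0 < #X := hXne.card_pos
    simp only [n]; exact_mod_cast (by omega : 0 < Fintype.card V)
  have hkn : 2 * k ≤ n := by simp only [n, k]; exact_mod_cast hX
  have h' : m * k * (n - k) ≤ n * B := le_of_mul_le_mul_left (by linarith) hn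
  have hmk : 0 ≤ m * k := mul_nonneg hm (Nat.cast_nonneg _)
  have h'' : m * k * n ≤ 2 * B * n := by nlinarith
  exact le_of_mul_le_mul_right h'' hn

theorem sum_adj_abs_sub_add_indicator {h : V → ℝ} {W : Finset V} (h0 : ∀ v, 0 ≤ h v)
    (hW : ∀ v ∉ W, h v = 0) {t : ℝ} (ht : 0 ≤ t) :
    ∑ u, ∑ v, (if G.Adj u v then
        |(h u + t * if u ∈ W then 1 else 0) - (h v + t * if v ∈ W then 1 else 0)| else 0) =
      ∑ u, ∑ v, (if G.Adj u v then |h u - h v| else 0) + 2 * t * #(G.edgeBoundary W) := by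
  rw [mul_right_comm, ← sum_adj_abs_sub_indicator, sum_mul, ← sum_add_distrib]
  refine sum_congr rfl fun u _ => ?_
  rw [sum_mul, ← sum_add_distrib]
  refine sum_congr rfl fun v _ => ?_
  split_ifs with hadj hu hv hv
  · simp
  · rw [hW v hv]
    simp [abs_of_nonneg (h0 u), abs_of_nonneg (add_nonneg (h0 u) ht)]
  · rw [hW u hu, abs_sub_comm, abs_sub_comm 0 (h v)]
    simp [abs_of_nonneg (h0 v), abs_of_nonneg (add_nonneg (h0 v) ht)]
  · simp [hW u hu, hW v hv]
  · simp

theorem mul_sum_le_sum_adj_abs_sub {θ : ℝ}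
    (hθ : ∀ X : Finset V, X.Nonempty → 2 * #X ≤ Fintype.card V → θ * #X ≤ #(G.edgeBoundary X))
    {h : V → ℝ} (h0 : ∀ v, 0 ≤ h v) (hsupp : 2 * #{v | 0 < h v} ≤ Fintype.card V) :
    θ * (2 * ∑ v, h v) ≤ ∑ u, ∑ v, if G.Adj u v then |h u - h v| else 0 := by
  induction hn : #{v | 0 < h v} using Nat.strong_induction_on generalizing h with
  | _ n ih =>
    set W : Finset V := {v | 0 < h v}
    have hzero : ∀ v ∉ W, h v = 0 := fun v hv =>
      le_antisymm (not_lt.1 (by simpa [W] using hv)) (h0 v)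
    rcases W.eq_empty_or_nonempty with hWe | hWne
    · have : h = 0 := funext fun v => hzero v (by simp [hWe])
      simp [this]
    -- peel off the lowest level `t` of `h`; the rest has strictly smaller support
    obtain ⟨v₀, hv₀, hmin⟩ := W.exists_min_image h hWne
    set t := h v₀
    have ht : 0 ≤ t := h0 v₀
    set h' : V → ℝ := fun v => if v ∈ W then h v - t else 0
    have hsupp' : ({v | 0 < h' v} : Finset V) ⊆ W.erase v₀ := fun v hv => by
      simp only [mem_filter, mem_univ, true_and, h'] at hv
      split_ifs at hv with hvW
      · exact mem_erase.2 ⟨by rintro rfl; exact lt_irrefl _ (sub_pos.1 hv), hvW⟩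
      · exact absurd hv (lt_irrefl 0)
    have hh' : ∀ v, h v = h' v + t * if v ∈ W then 1 else 0 := fun v => by
      by_cases hv : v ∈ W <;> simp [h', hv, hzero]
    have h'0 : ∀ v, 0 ≤ h' v := fun v => by
      by_cases hv : v ∈ W <;> simp [h', hv, hmin]
    have h'W : ∀ v ∉ W, h' v = 0 := fun v hv => by simp [h', hv]
    have hlt : #{v | 0 < h' v} < n := hn ▸ (card_le_card hsupp').trans_lt (card_erase_lt_of_mem hv₀)
    have IH := ih _ hlt h'0 (by omega) rfl
    have hWθ := hθ W hWne hsupp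
    calc θ * (2 * ∑ v, h v) = θ * (2 * ∑ v, h' v) + 2 * t * (θ * #W) := by
          simp only [hh', sum_add_distrib, ← mul_sum, sum_indicator_eq_card]
          ring
      _ ≤ ∑ u, ∑ v, (if G.Adj u v then |h' u - h' v| else 0) + 2 * t * #(G.edgeBoundary W) := by
          gcongr
      _ = ∑ u, ∑ v, if G.Adj u v then |h u - h v| else 0 := by
          rw [← G.sum_adj_abs_sub_add_indicator h'0 h'W ht]
          simp only [← hh']

theorem lapMatrix_mulVec_posPart_apply_le (f : V → ℝ) {v : V} (hv : 0 ≤ f v) :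
    (G.lapMatrix ℝ *ᵥ f⁺) v ≤ (G.lapMatrix ℝ *ᵥ f) v := by
  simp only [lapMatrix_mulVec_apply, Pi.posPart_apply, posPart_eq_self.2 hv]
  gcongr with u
  exact le_posPart (f u)

theorem dotProduct_posPart_lapMatrix_mulVec_le {f : V → ℝ} {m : ℝ}
    (hf : G.lapMatrix ℝ *ᵥ f = m • f) :
    f⁺ ⬝ᵥ (G.lapMatrix ℝ *ᵥ f⁺) ≤ m * (f⁺ ⬝ᵥ f⁺) := by
  rw [dotProduct, dotProduct, mul_sum]
  refine sum_le_sum fun v _ => ?_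
  rcases le_total 0 (f v) with hv | hv
  · calc f⁺ v * (G.lapMatrix ℝ *ᵥ f⁺) v ≤ f⁺ v * (G.lapMatrix ℝ *ᵥ f) v :=
          mul_le_mul_of_nonneg_left (G.lapMatrix_mulVec_posPart_apply_le f hv) (posPart_nonneg _)
      _ = m * (f⁺ v * f⁺ v) := by
          rw [hf, Pi.smul_apply, smul_eq_mul, Pi.posPart_apply, posPart_eq_self.2 hv]
          ring
  · simp [posPart_eq_zero.2 hv]

theorem le_sqrt_of_lapMatrix_mulVec_eq_smul {κ : ℕ} (hdeg : ∀ v, G.degree v ≤ κ) {θ : ℝ}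
    (hθ : ∀ X : Finset V, X.Nonempty → 2 * #X ≤ Fintype.card V → θ * #X ≤ #(G.edgeBoundary X))
    {f : V → ℝ} {m : ℝ} (hf : G.lapMatrix ℝ *ᵥ f = m • f) (hpos : ∃ v, 0 < f v)
    (hsupp : 2 * #{v | 0 < f v} ≤ Fintype.card V) : θ ≤ √(2 * κ * m) := by
  set g := f⁺
  set S := ∑ v, g v ^ 2
  have hS : 0 < S := by
    obtain ⟨v, hv⟩ := hpos
    exact sum_pos' (fun v _ => sq_nonneg _) ⟨v, mem_univ v, by simp [g, hv]⟩
  have hg0 : ∀ v, 0 ≤ g v := fun v => posPart_nonneg (f v)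
  have hcoarea : θ * (2 * S) ≤ ∑ u, ∑ v, if G.Adj u v then |g u ^ 2 - g v ^ 2| else 0 :=
    G.mul_sum_le_sum_adj_abs_sub hθ (fun v => sq_nonneg _)
      (by simpa [g, sq_pos_iff, posPart_eq_zero] using hsupp)
  have hdiff : ∑ u, ∑ v, (if G.Adj u v then (g u - g v) ^ 2 else 0) ≤ 2 * m * S := by
    have := G.dotProduct_posPart_lapMatrix_mulVec_le hf
    rw [dotProduct_lapMatrix_mulVec] at this
    simp only [dotProduct, ← sq] at this
    linarith
  have hmain : θ * (2 * S) ≤ 2 * S * √(2 * κ * m) := calc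
    θ * (2 * S) ≤ _ := hcoarea
    _ = ∑ u, ∑ v, if G.Adj u v then |g u - g v| * (g u + g v) else 0 := by
        refine sum_congr rfl fun u _ => sum_congr rfl fun v _ => ?_
        rw [sq_sub_sq, abs_mul, abs_of_nonneg (add_nonneg (hg0 u) (hg0 v)), mul_comm]
    _ ≤ _ := G.sum_adj_mul_le_sqrt_mul_sqrt _ _
    _ ≤ √(2 * m * S) * √(4 * κ * S) := by
        simp only [sq_abs]
        gcongr
        exact G.sum_adj_add_sq_le hdeg g
    _ = 2 * S * √(2 * κ * m) := by
        rw [← Real.sqrt_mul' _ (by positivity),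
          show 2 * m * S * (4 * κ * S) = (2 * S) ^ 2 * (2 * κ * m) by ring,
          Real.sqrt_mul (by positivity), Real.sqrt_sq (by positivity)]
  exact le_of_mul_le_mul_right (by linarith) (by positivity : 0 < 2 * S)

end

section

variable {N : ℕ} {G : SimpleGraph (Fin N)} [DecidableRel G.Adj] {q : Fin N → Fin N → ℝ}
  {μ : Fin N → ℝ}

theorem mul_dotProduct_self_le_dotProduct_lapMatrix_mulVec
    (horth : ∀ i j, q i ⬝ᵥ q j = if i = j then (1 : ℝ) else 0)
    (heig : ∀ i, G.lapMatrix ℝ *ᵥ q i = μ i • q i) (hmono : Monotone μ) {i₁ : Fin N}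
    (hi₁ : (i₁ : ℕ) = 1) {x : Fin N → ℝ} (hx : ∑ v, x v = 0) :
    μ i₁ * (x ⬝ᵥ x) ≤ x ⬝ᵥ (G.lapMatrix ℝ *ᵥ x) := by
  have hle : ∀ j : Fin N, (j : ℕ) ≠ 0 → μ i₁ ≤ μ j := fun j hj => hmono (Fin.le_def.2 (by omega))
  refine mul_dotProduct_self_le_dotProduct_mulVec horth heig fun i hi => ?_
  obtain rfl : i = ⟨0, i₁.pos⟩ := Fin.ext (not_not.1 fun h => hi.not_ge (hle i h))
  set i₀ : Fin N := ⟨0, i₁.pos⟩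
  -- every eigenvalue above `i₀` is positive, so `1` is a multiple of `q i₀`
  have hq : ∀ j ≠ i₀, q j ⬝ᵥ 1 = 0 := fun j hj => by
    rw [dotProduct_one]
    refine G.sum_eq_zero_of_lapMatrix_mulVec_eq_smul (heig j) (ne_of_gt ?_)
    have hμ₀ := G.nonneg_of_lapMatrix_mulVec_eq_smul (heig i₀) (by rw [horth, if_pos rfl])
    exact (hμ₀.trans_lt hi).trans_le (hle j fun h => hj (Fin.ext h))
  have h1 := eq_smul_of_dotProduct_eq_zero horth hq
  have hc : q i₀ ⬝ᵥ 1 ≠ 0 := fun h => by simpa [h] using congrFun h1 i₀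
  have : (q i₀ ⬝ᵥ 1) * (q i₀ ⬝ᵥ x) = 0 := by
    rw [← smul_eq_mul, ← smul_dotProduct, ← h1, one_dotProduct, hx]
  exact (mul_eq_zero.1 this).resolve_left hc

theorem exists_lapMatrix_mulVec_eq_smul_sum_eq_zero
    (horth : ∀ i j, q i ⬝ᵥ q j = if i = j then (1 : ℝ) else 0)
    (heig : ∀ i, G.lapMatrix ℝ *ᵥ q i = μ i • q i) (hmono : Monotone μ) {i₁ : Fin N}
    (hi₁ : (i₁ : ℕ) = 1) : ∃ f ≠ 0, G.lapMatrix ℝ *ᵥ f = μ i₁ • f ∧ ∑ v, f v = 0 := by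
  set i₀ : Fin N := ⟨0, i₁.pos⟩
  have hnorm : ∀ i, q i ⬝ᵥ q i = 1 := fun i => by rw [horth, if_pos rfl]
  have hq₁ : q i₁ ≠ 0 := fun h => by simpa [h] using hnorm i₁
  by_cases hμ₁ : μ i₁ = 0
  · -- `μ i₀ = μ i₁ = 0`: some combination of `q i₀` and `q i₁` is orthogonal to `1`
    have hμ₀ : μ i₀ = μ i₁ := le_antisymm (hmono (Fin.le_def.2 (Nat.zero_le _)))
      (hμ₁ ▸ G.nonneg_of_lapMatrix_mulVec_eq_smul (heig i₀) (hnorm i₀))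
    have h₁₀ : q i₁ ⬝ᵥ q i₀ = 0 := by
      rw [horth, if_neg fun h => by simpa [i₀, hi₁] using congrArg Fin.val h]
    obtain ⟨f, hf0, hf, hf1⟩ := exists_ne_zero_mulVec_eq_smul_dotProduct_eq_zero (hnorm i₀)
      h₁₀ hq₁ (hμ₀ ▸ heig i₀) (heig i₁) 1
    exact ⟨f, hf0, hf, by rwa [dotProduct_one] at hf1⟩
  · exact ⟨q i₁, hq₁, heig i₁, G.sum_eq_zero_of_lapMatrix_mulVec_eq_smul (heig i₁) hμ₁⟩

end

end SimpleGraph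

/-- Let `G` be a graph on `N` vertices with maximum degree `κ`, let
`μ₂` be the second-smallest eigenvalue of its Laplacian `L = D − A` (orthonormal
eigenbasis `q`, nondecreasing eigenvalues `μ`), and let
`θ(G) = min{|∂X|/|X| : ∅ ≠ X ⊆ V, |X| ≤ N/2}` be the isoperimetric number, where
`|∂X|` counts edges with exactly one endpoint in `X`. Then `μ₂/2 ≤ θ(G) ≤ √(2κμ₂)`. -/
theorem statement16 {N : ℕ} (hN : 2 ≤ N) (G : SimpleGraph (Fin N)) [DecidableRel G.Adj]
    (κ : ℕ) (hdeg : ∀ v : Fin N, G.degree v ≤ κ)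
    (q : Fin N → Fin N → ℝ) (μ : Fin N → ℝ)
    (horth : ∀ i j : Fin N, q i ⬝ᵥ q j = if i = j then (1 : ℝ) else 0)
    (heig : ∀ i : Fin N, (G.lapMatrix ℝ) *ᵥ q i = μ i • q i)
    (hmono : Monotone μ)
    (θ : ℝ)
    (hθ : IsLeast
      {r : ℝ | ∃ X : Finset (Fin N), X.Nonempty ∧ 2 * X.card ≤ N ∧
        r = ((Finset.univ.filter
              (fun e : Fin N × Fin N => G.Adj e.1 e.2 ∧ e.1 ∈ X ∧ e.2 ∉ X)).card : ℝ) /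
            (X.card : ℝ)} θ) :
    μ ⟨1, by omega⟩ / 2 ≤ θ ∧ θ ≤ Real.sqrt (2 * κ * μ ⟨1, by omega⟩) := by
  have hθX : ∀ X : Finset (Fin N), X.Nonempty → 2 * #X ≤ Fintype.card (Fin N) →
      θ * #X ≤ #(G.edgeBoundary X) := fun X hX hXN =>
    (le_div_iff₀ (by exact_mod_cast hX.card_pos)).1
      (hθ.2 ⟨X, hX, by simpa using hXN, rfl⟩)
  constructor
  · obtain ⟨X, hX, hXN, rfl⟩ := hθ.1
    rw [div_le_div_iff₀ two_pos (by exact_mod_cast hX.card_pos), mul_comm _ 2]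
    exact G.mul_card_le_two_mul_card_edgeBoundary
      (G.nonneg_of_lapMatrix_mulVec_eq_smul (heig _) (by rw [horth, if_pos rfl]))
      (fun x hx => mul_dotProduct_self_le_dotProduct_lapMatrix_mulVec horth heig hmono rfl hx)
      (by simpa using hXN)
  · obtain ⟨f, hf0, hf, hsum⟩ := exists_lapMatrix_mulVec_eq_smul_sum_eq_zero horth heig hmono
      (i₁ := ⟨1, by omega⟩) rfl
    rcases two_mul_card_pos_le_or f with hsupp | hsupp
    · exact G.le_sqrt_of_lapMatrix_mulVec_eq_smul hdeg hθX hf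
        (exists_pos_of_sum_eq_zero hsum hf0) hsupp
    · exact G.le_sqrt_of_lapMatrix_mulVec_eq_smul hdeg hθX (f := -f)
        (by rw [mulVec_neg, hf, smul_neg])
        (exists_pos_of_sum_eq_zero (by simp [hsum]) (neg_ne_zero.2 hf0)) hsupp
end
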